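/- arXiv:2206.02667 — 4 statements merged into one kernel-verified Lean document; each statement's English description precedes it below -/
import Mathlib

section
/- Let x_1,...,x_n and y_1,...,y_m be points in R^d, and let C_x, C_y be the convex hulls of {x_i} and {y_j} respectively. If C_x and C_y intersect, then there do not exist points x̄, ȳ in R^d such that ‖x_i − x̄‖ < ‖x_i − ȳ‖ for all i and ‖y_j − ȳ‖ < ‖y_j − x̄‖ for all j. -/
/-! The points strictly closer to `a` than to `b` form an open half-space, bounded by the
perpendicular bisector of `a` and `b`. So the convex hull of the `xᵢ` lies in the half-space
of points closer to `x̄`, the convex hull of the `yⱼ` in the opposite one, and the two hulls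
are disjoint. -/

section

variable {F : Type*} [NormedAddCommGroup F] [InnerProductSpace ℝ F]

theorem norm_sub_lt_norm_sub_iff_inner_lt (v a b : F) :
    ‖v - a‖ < ‖v - b‖ ↔ 2 * inner ℝ (b - a) v < ‖b‖ ^ 2 - ‖a‖ ^ 2 := by
  rw [← sq_lt_sq₀ (norm_nonneg _) (norm_nonneg _), norm_sub_sq_real, norm_sub_sq_real,
    inner_sub_left, real_inner_comm a, real_inner_comm b]
  constructor <;> intro h <;> linarith

theorem convex_setOf_norm_sub_lt_norm_sub (a b : F) : Convex ℝ {v | ‖v - a‖ < ‖v - b‖} := by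
  simp only [norm_sub_lt_norm_sub_iff_inner_lt]
  exact convex_halfSpace_lt (((2 : ℝ) • innerₛₗ ℝ (b - a)).isLinear) _

end

theorem stmt0 {d n m : ℕ} (x : Fin n → EuclideanSpace ℝ (Fin d))
    (y : Fin m → EuclideanSpace ℝ (Fin d))
    (hinter : (convexHull ℝ (Set.range x) ∩ convexHull ℝ (Set.range y)).Nonempty) :
    ¬ ∃ (xb yb : EuclideanSpace ℝ (Fin d)),
      (∀ i, ‖x i - xb‖ < ‖x i - yb‖) ∧ (∀ j, ‖y j - yb‖ < ‖y j - xb‖) := by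
  rintro ⟨xb, yb, hx, hy⟩
  obtain ⟨p, hpx, hpy⟩ := hinter
  have hCx : convexHull ℝ (Set.range x) ⊆ {v | ‖v - xb‖ < ‖v - yb‖} :=
    convexHull_min (Set.range_subset_iff.mpr hx) (convex_setOf_norm_sub_lt_norm_sub xb yb)
  have hCy : convexHull ℝ (Set.range y) ⊆ {v | ‖v - yb‖ < ‖v - xb‖} :=
    convexHull_min (Set.range_subset_iff.mpr hy) (convex_setOf_norm_sub_lt_norm_sub yb xb)
  exact lt_asymm (a := ‖p - xb‖) (hCx hpx) (hCy hpy)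
end

section
/- Suppose for every t the inequalities R̄^learner(α^t, Θ^{t+1}) ≤ R̄^learner(α^t, Θ^t) (componentwise in j, weighted appropriately) and R̄^subpop(α^{t+1}, Θ^{t+1}) ≤ R̄^subpop(α^t, Θ^{t+1}) (componentwise in i) hold. Then the total risk R^total(α^t, Θ^t) = Σ_{i,j} β_i α^t_{ij} R_i(θ^t_j) is non-increasing in t: R^total(α^{t+1}, Θ^{t+1}) ≤ R^total(α^t, Θ^t). -/
/-! Splitting one step of the alternating scheme at the intermediate state (α^t, Θ^{t+1}): the
allocation update lowers each subpopulation's risk, hence the `β`-weighted total, and the parameter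
update lowers each learner's weighted risk, hence the total summed learner by learner. -/

open Finset

lemma sum_sum_le_sum_sum_of_forall_sum_le {ι κ M : Type*} [Fintype ι] [Fintype κ]
    [AddCommMonoid M] [PartialOrder M] [IsOrderedAddMonoid M] {f g : ι → κ → M}
    (h : ∀ j, ∑ i, f i j ≤ ∑ i, g i j) :
    ∑ i, ∑ j, f i j ≤ ∑ i, ∑ j, g i j := by
  rw [sum_comm, sum_comm (f := g)]
  exact sum_le_sum fun j _ => h j

lemma sum_sum_mul_le_sum_sum_mul {ι κ R : Type*} [Fintype ι] [Fintype κ]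
    [Semiring R] [PartialOrder R] [IsOrderedRing R] {w : ι → R} {f g : ι → κ → R}
    (hw : ∀ i, 0 ≤ w i) (h : ∀ i, ∑ j, f i j ≤ ∑ j, g i j) :
    ∑ i, ∑ j, w i * f i j ≤ ∑ i, ∑ j, w i * g i j := by
  simp_rw [← mul_sum]
  exact sum_le_sum fun i _ => mul_le_mul_of_nonneg_left (h i) (hw i)

theorem stmt5_general {n m d : ℕ} (R : Fin n → EuclideanSpace ℝ (Fin d) → ℝ)
    (β : Fin n → ℝ) (hβ : ∀ i, 0 < β i)
    (α : ℕ → Fin n → Fin m → ℝ) (Θ : ℕ → Fin m → EuclideanSpace ℝ (Fin d))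
    (hlearner : ∀ t j, ∑ i, β i * α t i j * R i (Θ (t+1) j)
        ≤ ∑ i, β i * α t i j * R i (Θ t j))
    (hsubpop : ∀ t i, ∑ j, α (t+1) i j * R i (Θ (t+1) j)
        ≤ ∑ j, α t i j * R i (Θ (t+1) j)) :
    ∀ t, ∑ i, ∑ j, β i * α (t+1) i j * R i (Θ (t+1) j)
        ≤ ∑ i, ∑ j, β i * α t i j * R i (Θ t j) := by
  intro t
  calc ∑ i, ∑ j, β i * α (t+1) i j * R i (Θ (t+1) j)
      ≤ ∑ i, ∑ j, β i * α t i j * R i (Θ (t+1) j) := by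
        simpa only [mul_assoc] using
          sum_sum_mul_le_sum_sum_mul (fun i => (hβ i).le) (hsubpop t)
    _ ≤ ∑ i, ∑ j, β i * α t i j * R i (Θ t j) :=
        sum_sum_le_sum_sum_of_forall_sum_le (hlearner t)

theorem stmt5 {n m d : ℕ} (R : Fin n → EuclideanSpace ℝ (Fin d) → ℝ)
    (β : Fin n → ℝ) (hβ : ∀ i, 0 < β i) (hβsum : ∑ i, β i = 1)
    (α : ℕ → Fin n → Fin m → ℝ) (Θ : ℕ → Fin m → EuclideanSpace ℝ (Fin d))
    (hα : ∀ t i, (∀ j, 0 ≤ α t i j) ∧ ∑ j, α t i j = 1)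
    (hlearner : ∀ t j, ∑ i, β i * α t i j * R i (Θ (t+1) j)
        ≤ ∑ i, β i * α t i j * R i (Θ t j))
    (hsubpop : ∀ t i, ∑ j, α (t+1) i j * R i (Θ (t+1) j)
        ≤ ∑ j, α t i j * R i (Θ (t+1) j)) :
    ∀ t, ∑ i, ∑ j, β i * α (t+1) i j * R i (Θ (t+1) j)
        ≤ ∑ i, ∑ j, β i * α t i j * R i (Θ t j) :=
  stmt5_general R β hβ α Θ hlearner hsubpop
end

section
/- With quadratic risks R_i(θ) = ‖θ − φ_i‖² on R^d, three subpopulations with weights β_1, β_2, β_3 > 0 summing to 1, and two learners, consider the split market placing {1} with learner 1 and {2,3} with learner 2, with θ_1 = φ_1 and θ_2 = (β_2 φ_2 + β_3 φ_3)/(β_2 + β_3). Then the split-market stability condition — R_2(θ_2) < R_2(θ_1) and R_3(θ_2) < R_3(θ_1) and R_1(θ_1) < R_1(θ_2) — is equivalent (assuming φ_1, φ_2, φ_3 not all equal and φ_1 ∉ {θ_2}) to ‖φ_2 − φ_3‖ < (β_2 + β_3) · min{ ‖φ_2 − φ_1‖/β_3, ‖φ_3 − φ_1‖/β_2 }. 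-/
/-! The weighted mean θ2 lies on the segment from φ2 to φ3, at distance
β3/(β2+β3)·‖φ2 - φ3‖ from φ2 and β2/(β2+β3)·‖φ2 - φ3‖ from φ3, so after taking square roots
the first two inequalities become linear bounds on ‖φ2 - φ3‖; the third one just says φ1 ≠ θ2. -/

section WeightedMean

variable {E : Type*} [NormedAddCommGroup E] [NormedSpace ℝ E]

lemma sub_weighted_mean_left {a b : ℝ} (hab : a + b ≠ 0) (x y : E) :
    x - (a + b)⁻¹ • (a • x + b • y) = (b / (a + b)) • (x - y) := by
  match_scalars <;> field_simp; ring

lemma norm_sub_weighted_mean_left {a b : ℝ} (hb : 0 ≤ b) (hab : 0 < a + b) (x y : E) :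
    ‖x - (a + b)⁻¹ • (a • x + b • y)‖ = b / (a + b) * ‖x - y‖ := by
  rw [sub_weighted_mean_left hab.ne', norm_smul, Real.norm_of_nonneg (by positivity)]

lemma norm_sub_weighted_mean_right {a b : ℝ} (ha : 0 ≤ a) (hab : 0 < a + b) (x y : E) :
    ‖y - (a + b)⁻¹ • (a • x + b • y)‖ = a / (a + b) * ‖x - y‖ := by
  rw [add_comm a b, add_comm (a • x), norm_sub_weighted_mean_left ha (by linarith), norm_sub_rev]

end WeightedMean

lemma sq_div_mul_lt_sq_iff {c s t r : ℝ} (hc : 0 < c) (hs : 0 < s) (ht : 0 ≤ t) (hr : 0 ≤ r) :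
    (c / s * t) ^ 2 < r ^ 2 ↔ t < s * (r / c) := by
  rw [sq_lt_sq₀ (by positivity) hr, div_mul_eq_mul_div, div_lt_iff₀ hs, mul_div_assoc',
    lt_div_iff₀ hc, mul_comm c, mul_comm r]

theorem stmt10_general {d : ℕ} (φ1 φ2 φ3 : EuclideanSpace ℝ (Fin d)) (β2 β3 : ℝ)
    (hβ2 : 0 < β2) (hβ3 : 0 < β3)
    (θ2 : EuclideanSpace ℝ (Fin d))
    (hθ2 : θ2 = (β2 + β3)⁻¹ • (β2 • φ2 + β3 • φ3))
    (hne : φ1 ≠ θ2) :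
    (‖φ2 - θ2‖^2 < ‖φ2 - φ1‖^2 ∧ ‖φ3 - θ2‖^2 < ‖φ3 - φ1‖^2 ∧
      ‖φ1 - φ1‖^2 < ‖φ1 - θ2‖^2)
    ↔ ‖φ2 - φ3‖ < (β2 + β3) * min (‖φ2 - φ1‖ / β3) (‖φ3 - φ1‖ / β2) := by
  have hs : 0 < β2 + β3 := add_pos hβ2 hβ3
  have hθ1 : ‖φ1 - φ1‖ ^ 2 < ‖φ1 - θ2‖ ^ 2 := by
    rw [sub_self, norm_zero, sq_lt_sq₀ le_rfl (norm_nonneg _)]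
    exact norm_pos_iff.2 (sub_ne_zero.2 hne)
  subst hθ2
  rw [norm_sub_weighted_mean_left hβ3.le hs, norm_sub_weighted_mean_right hβ2.le hs,
    sq_div_mul_lt_sq_iff hβ3 hs (norm_nonneg _) (norm_nonneg _),
    sq_div_mul_lt_sq_iff hβ2 hs (norm_nonneg _) (norm_nonneg _),
    mul_min_of_nonneg _ _ hs.le, lt_min_iff]
  simp only [hθ1, and_true]

theorem stmt10 {d : ℕ} (φ1 φ2 φ3 : EuclideanSpace ℝ (Fin d)) (β2 β3 : ℝ)
    (hβ2 : 0 < β2) (hβ3 : 0 < β3)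
    (h21 : φ2 ≠ φ1) (h31 : φ3 ≠ φ1)
    (θ2 : EuclideanSpace ℝ (Fin d))
    (hθ2 : θ2 = (β2 + β3)⁻¹ • (β2 • φ2 + β3 • φ3))
    (hne : φ1 ≠ θ2) :
    (‖φ2 - θ2‖^2 < ‖φ2 - φ1‖^2 ∧ ‖φ3 - θ2‖^2 < ‖φ3 - φ1‖^2 ∧
      ‖φ1 - φ1‖^2 < ‖φ1 - θ2‖^2)
    ↔ ‖φ2 - φ3‖ < (β2 + β3) * min (‖φ2 - φ1‖ / β3) (‖φ3 - φ1‖ / β2) :=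
  stmt10_general φ1 φ2 φ3 β2 β3 hβ2 hβ3 θ2 hθ2 hne
end

section
/- Let f : D → D be continuous on D ⊆ R^k, x_eq a fixed point of f, and V : D → R continuous with V(x_eq) = 0, V(x) > 0 for all x ∈ D \ {x_eq}, and V(f(x)) < V(x) for all x ∈ D \ {x_eq}. Then x_eq is asymptotically stable: for every ε > 0 there is δ > 0 such that any trajectory starting within δ of x_eq stays within ε and converges to x_eq. -/
/-!
Stability: inside a closed ball `closedBall p r ⊆ D`, `V` is bounded below by some `α > 0` on the
annulus between radii `s` and `r`, where `f` maps `ball p s` into `ball p r`. Since `V` does not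
increase along `f`, no orbit starting in `ball p s ∩ {V < α}` can jump across the annulus, so this
neighbourhood of `p` is forward invariant. Attraction: along such an orbit `V` decreases to some
`c ≥ 0`; if `c > 0`, the decrease `V - V ∘ f` is bounded below by some `μ > 0` on the compact set
`{V ≥ c}` of the ball, which is impossible, so `V → 0` and hence the orbit tends to `p`.
-/

open Filter Topology Set Metric

theorem tendsto_of_lyapunov_tendsto_zero {X ι : Type*} [TopologicalSpace X] {l : Filter ι}
    {K : Set X} {V : X → ℝ} {p : X} (hK : IsCompact K) (hVc : ContinuousOn V K)
    (hVpos : ∀ x ∈ K, x ≠ p → 0 < V x) {u : ι → X} (hu : ∀ i, u i ∈ K)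
    (hV : Tendsto (V ∘ u) l (𝓝 0)) : Tendsto u l (𝓝 p) := by
  rw [_root_.tendsto_nhds]
  intro U hU hpU
  obtain ⟨β, hβ, hβV⟩ := (hK.diff hU).exists_forall_le' (hVc.mono sdiff_subset) (a := 0)
    fun x hx => hVpos x hx.1 (by rintro rfl; exact hx.2 hpU)
  filter_upwards [hV.eventually_lt_const hβ] with i hi
  by_contra hiU
  exact (hβV _ ⟨hu i, hiU⟩).not_gt hi

theorem lyapunov_iterate_tendsto_zero {X : Type*} [TopologicalSpace X] [T2Space X]
    {f : X → X} {V : X → ℝ} {p : X} {K : Set X} (hK : IsCompact K) (hVc : ContinuousOn V K)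
    (hVfc : ContinuousOn (V ∘ f) K) (hfix : f p = p) (hV0 : V p = 0) (hVpos : ∀ x ∈ K, x ≠ p → 0 < V x)
    (hVdec : ∀ x ∈ K, x ≠ p → V (f x) < V x) {x : X} (hx : ∀ t, f^[t] x ∈ K) :
    Tendsto (fun t => V (f^[t] x)) atTop (𝓝 0) := by
  have hVnn : ∀ y ∈ K, 0 ≤ V y := fun y hy =>
    (eq_or_ne y p).elim (fun h => h ▸ hV0.ge) fun h => (hVpos y hy h).le
  have hanti : Antitone fun t => V (f^[t] x) := antitone_nat_of_succ_le fun t => by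
    rw [Function.iterate_succ_apply']
    exact (eq_or_ne (f^[t] x) p).elim (fun h => by rw [h, hfix]) fun h => (hVdec _ (hx t) h).le
  have hbdd : BddBelow (range fun t => V (f^[t] x)) :=
    ⟨0, forall_mem_range.2 fun t => hVnn _ (hx t)⟩
  have hlim := tendsto_atTop_ciInf hanti hbdd
  set c := ⨅ t, V (f^[t] x)
  suffices c = 0 by rwa [this] at hlim
  refine le_antisymm (not_lt.1 fun hc => ?_) (le_ciInf fun t => hVnn _ (hx t))
  have hKc : IsCompact (K ∩ V ⁻¹' Ici c) := hK.of_isClosed_subset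
    (hVc.preimage_isClosed_of_isClosed hK.isClosed isClosed_Ici) inter_subset_left
  obtain ⟨μ, hμ, hμle⟩ := hKc.exists_forall_le' ((hVc.sub hVfc).mono inter_subset_left) (a := 0)
    fun y hy => sub_pos.2 <| hVdec y hy.1 <| by
      rintro rfl
      exact (hV0 ▸ hc).not_ge hy.2
  have hstep : ∀ t, V (f^[t + 1] x) ≤ V (f^[t] x) - μ := fun t => by
    have := hμle _ ⟨hx t, ciInf_le hbdd t⟩
    rw [Function.iterate_succ_apply']
    simp only [Pi.sub_apply, Function.comp_apply] at this
    linarith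
  have := le_of_tendsto_of_tendsto' (hlim.comp (tendsto_add_atTop_nat 1)) (hlim.sub_const μ) hstep
  linarith

theorem exists_invariant_nhds_subset_ball {X : Type*} [MetricSpace X] [ProperSpace X]
    {D : Set X} {f : X → X} {V : X → ℝ} {p : X} {r : ℝ} (hr : 0 < r) (hrD : closedBall p r ⊆ D)
    (hf : ContinuousAt f p) (hfix : f p = p) (hVc : ContinuousOn V D) (hV0 : V p = 0)
    (hVpos : ∀ x ∈ D, x ≠ p → 0 < V x) (hVle : ∀ x ∈ D, V (f x) ≤ V x) :
    ∃ U ∈ 𝓝 p, MapsTo f U U ∧ U ⊆ ball p r := by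
  obtain ⟨s, hs, hfs⟩ := Metric.continuousAt_iff.mp hf r hr
  set s' := min s r
  have hs' : 0 < s' := lt_min hs hr
  have hs'r : ball p s' ⊆ ball p r := ball_subset_ball (min_le_right _ _)
  obtain ⟨α, hα, hαV⟩ := ((isCompact_closedBall p r).diff isOpen_ball).exists_forall_le'
    (hVc.mono (sdiff_subset.trans hrD)) (a := 0)
    fun x hx => hVpos x (hrD hx.1) (by rintro rfl; exact hx.2 (mem_ball_self hs'))
  have hVα : V ⁻¹' Iio α ∈ 𝓝 p :=
    (hVc.continuousAt (mem_of_superset (closedBall_mem_nhds p hr) hrD)).preimage_mem_nhds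
      (Iio_mem_nhds (hV0 ▸ hα))
  refine ⟨ball p s' ∩ V ⁻¹' Iio α, inter_mem (ball_mem_nhds p hs') hVα, ?_,
    inter_subset_left.trans hs'r⟩
  rintro x ⟨hxs, hxα⟩
  have hfxα : V (f x) < α := (hVle x (hrD (ball_subset_closedBall (hs'r hxs)))).trans_lt hxα
  refine ⟨?_, hfxα⟩
  by_contra hfx
  have hfxr : f x ∈ closedBall p r := by
    have := hfs ((mem_ball.1 hxs).trans_le (min_le_left _ _))
    rw [hfix] at this
    exact ball_subset_closedBall this
  exact (hαV _ ⟨hfxr, hfx⟩).not_gt hfxα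

theorem stmt14 {k : ℕ} (D : Set (EuclideanSpace ℝ (Fin k))) (hD : IsOpen D)
    (xeq : EuclideanSpace ℝ (Fin k)) (hxeq : xeq ∈ D)
    (f : EuclideanSpace ℝ (Fin k) → EuclideanSpace ℝ (Fin k))
    (hf : ContinuousOn f D) (hmaps : Set.MapsTo f D D) (hfix : f xeq = xeq)
    (V : EuclideanSpace ℝ (Fin k) → ℝ) (hVc : ContinuousOn V D)
    (hV0 : V xeq = 0) (hVpos : ∀ x ∈ D, x ≠ xeq → 0 < V x)
    (hVdec : ∀ x ∈ D, x ≠ xeq → V (f x) < V x) :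
    ∀ ε > 0, ∃ δ > 0, ∀ x0 ∈ D, dist x0 xeq < δ →
      (∀ t : ℕ, dist (f^[t] x0) xeq < ε) ∧
      Filter.Tendsto (fun t : ℕ => f^[t] x0) Filter.atTop (nhds xeq) := by
  intro ε hε
  obtain ⟨r, hr, hrD⟩ := nhds_basis_closedBall.mem_iff.1 (hD.mem_nhds hxeq)
  set r' := min r ε
  have hr'D : closedBall xeq r' ⊆ D := (closedBall_subset_closedBall (min_le_left _ _)).trans hrD
  have hVle : ∀ x ∈ D, V (f x) ≤ V x := fun x hx =>
    (eq_or_ne x xeq).elim (fun h => by rw [h, hfix]) fun h => (hVdec x hx h).le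
  obtain ⟨U, hU, hfU, hUr⟩ := exists_invariant_nhds_subset_ball (lt_min hr hε) hr'D
    (hf.continuousAt (hD.mem_nhds hxeq)) hfix hVc hV0 hVpos hVle
  obtain ⟨δ, hδ, hδU⟩ := Metric.mem_nhds_iff.1 hU
  refine ⟨δ, hδ, fun x0 _ hx0 => ?_⟩
  have htraj : ∀ t, f^[t] x0 ∈ ball xeq r' := fun t => hUr (hfU.iterate t (hδU hx0))
  have hK : ∀ t, f^[t] x0 ∈ closedBall xeq r' := fun t => ball_subset_closedBall (htraj t)
  have hVposK : ∀ x ∈ closedBall xeq r', x ≠ xeq → 0 < V x := fun x hx => hVpos x (hr'D hx)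
  refine ⟨fun t => (htraj t).trans_le (min_le_right _ _), ?_⟩
  exact tendsto_of_lyapunov_tendsto_zero (isCompact_closedBall xeq r') (hVc.mono hr'D) hVposK hK
    (lyapunov_iterate_tendsto_zero (isCompact_closedBall xeq r') (hVc.mono hr'D)
      ((hVc.comp hf hmaps).mono hr'D) hfix hV0 hVposK (fun x hx => hVdec x (hr'D hx)) hK)
end
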